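/- Let ζ be Anick's automorphism of R = k[y₁,y₂,y₃,y₄] and suppose ζ = φₙ ∘ ⋯ ∘ φ₁ where each φᵢ is an elementary automorphism preserving the grading deg y₁ = deg y₂ = 1, deg y₃ = deg y₄ = -1. Let ρ be obtained from this composition by replacing every nonlinear elementary factor that changes y₃ or y₄ by its linear part. Then ρ(y₃) = y₃, ρ(y₄) = y₄, and the polynomials f = ζ(y₁) - ρ(y₁) and g = ζ(y₂) - ρ(y₂) lie in I³, where I = (y₁, y₂). -/

import Mathlib

open MvPolynomial

/-- Description of an elementary automorphism of `k[y₁,y₂,y₃,y₄]`: either a linear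
map, or the addition to the variable `y_{i₀}` of a polynomial `f` (in the other
variables). -/
inductive ElemDesc (k : Type) [Field k] where
  | lin (A : Matrix (Fin 4) (Fin 4) k) : ElemDesc k
  | add (i₀ : Fin 4) (f : MvPolynomial (Fin 4) k) : ElemDesc k

namespace ElemDesc

variable {k : Type} [Field k]

/-- The images of the variables under the described elementary map. -/
noncomputable def toVec : ElemDesc k → (Fin 4 → MvPolynomial (Fin 4) k)
  | lin A => fun i => ∑ j, C (A i j) * X j
  | add i₀ f => Function.update X i₀ (X i₀ + f)

/-- The described elementary map as an algebra endomorphism. -/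
noncomputable def toHom (d : ElemDesc k) : MvPolynomial (Fin 4) k →ₐ[k] MvPolynomial (Fin 4) k :=
  aeval d.toVec

/-- The replacement rule: a (possibly nonlinear) elementary factor changing `y₃` or
`y₄` is replaced by its linear part; all other factors are kept. -/
noncomputable def rhoHom : ElemDesc k → (MvPolynomial (Fin 4) k →ₐ[k] MvPolynomial (Fin 4) k)
  | lin A => toHom (lin A)
  | add i₀ f =>
    if i₀ = 2 ∨ i₀ = 3 then
      aeval (Function.update X i₀ (X i₀ + homogeneousComponent 1 f))
    else toHom (add i₀ f)

/-- A description is admissible if it gives an elementary automorphism preserving the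
grading `deg y₁ = deg y₂ = 1`, `deg y₃ = deg y₄ = -1`. -/
def IsGood (d : ElemDesc k) : Prop :=
  Function.Bijective d.toHom ∧
  (∀ j : Fin 4, d.toVec j ∈ weightedHomogeneousSubmodule k
    (![1, 1, -1, -1] : Fin 4 → ℤ) ((![1, 1, -1, -1] : Fin 4 → ℤ) j)) ∧
  (match d with
    | lin _ => True
    | add i₀ f => f ∈ MvPolynomial.supported k ({i₀}ᶜ : Set (Fin 4)))

end ElemDesc

/-!
Compare the partial compositions `ζⱼ` and `ρⱼ`. All factors are graded, so `ρⱼ(yᵢ)` stays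
weighted homogeneous of weight `deg yᵢ`, `ρⱼ` preserves the span of `y₃, y₄`, and
`ζⱼ(yᵢ) - ρⱼ(yᵢ)` lies in `I³` for `i = 1, 2` and in `I` for `i = 3, 4`. A replaced factor
`yᵢ ↦ yᵢ + f` differs from its linear part `yᵢ ↦ yᵢ + f₁` by `f - f₁ ∈ I`, because a monomial
of weight `-1` free of `y₁, y₂` is linear. The two substitutions therefore agree modulo `I`,
and exactly on `y₁, y₂`; hence they agree modulo `I³` on `I²`, which contains every monomial of
weight `1` involving `y₃` or `y₄`. At the end `ρ(y₃)` and `ρ(y₄)` are linear forms in `y₃, y₄`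
congruent to `y₃` and `y₄` modulo `I`, so they equal them.
-/

section RingHom

open scoped Pointwise

variable {A B F : Type*} [CommRing A] [CommRing B] [FunLike F A B] [RingHomClass F A B]

theorem map_mem_pow_of_mapsTo {φ : F} {s : Set A} {L : Ideal B} (hL : Set.MapsTo φ s L)
    {n : ℕ} {a : A} (ha : a ∈ Ideal.span s ^ n) : φ a ∈ L ^ n := by
  refine Ideal.pow_right_mono ?_ n (Ideal.map_pow φ _ n ▸ Ideal.mem_map_of_mem φ ha)
  rw [Ideal.map_span, Ideal.span_le]
  rintro _ ⟨x, hx, rfl⟩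
  exact hL hx

theorem map_sub_map_mem_pow_mul {φ ψ : F} {s : Set A} {L J : Ideal B}
    (heq : Set.EqOn φ ψ s) (hL : Set.MapsTo φ s L) (hJ : ∀ a, φ a - ψ a ∈ J)
    {n : ℕ} {a : A} (ha : a ∈ Ideal.span s ^ n) : φ a - ψ a ∈ L ^ n * J := by
  have hψ : Set.MapsTo ψ s L := fun x hx => heq hx ▸ hL hx
  have hpow : ∀ m, ∀ x ∈ s ^ m, φ x = ψ x := by
    intro m
    induction m with
    | zero => simp
    | succ m ih =>
      rw [pow_succ]
      rintro _ ⟨x, hx, y, hy, rfl⟩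
      simp only [map_mul, ih x hx, heq hy]
  rw [Ideal.span, Submodule.span_pow] at ha
  induction ha using Submodule.span_induction with
  | mem x hx => simp [hpow n x hx]
  | zero => simp
  | add x y _ _ hx hy => simpa only [map_add, add_sub_add_comm] using add_mem hx hy
  | smul c x hx ih =>
    have hψx : ψ x ∈ L ^ n :=
      map_mem_pow_of_mapsTo hψ (by rwa [Ideal.span, Submodule.span_pow])
    rw [smul_eq_mul, map_mul, map_mul,
      show φ c * φ x - ψ c * ψ x = φ c * (φ x - ψ x) + (φ c - ψ c) * ψ x by ring]
    exact add_mem (Ideal.mul_mem_left _ _ ih)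
      (mul_comm (L ^ n) J ▸ Ideal.mul_mem_mul (hJ c) hψx)

end RingHom

namespace MvPolynomial

variable {σ R S : Type*} [CommSemiring R] [CommRing S] [Algebra R S]

theorem algHom_sub_mem_of_X {φ ψ : MvPolynomial σ R →ₐ[R] S} {J : Ideal S}
    (h : ∀ i, φ (X i) - ψ (X i) ∈ J) (p : MvPolynomial σ R) : φ p - ψ p ∈ J := by
  have : (Ideal.Quotient.mkₐ R J).comp φ = (Ideal.Quotient.mkₐ R J).comp ψ :=
    algHom_ext fun i => by simpa [Ideal.Quotient.mkₐ_eq_mk, Ideal.Quotient.eq] using h i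
  simpa [Ideal.Quotient.mkₐ_eq_mk, Ideal.Quotient.eq] using congrArg (· p) this

theorem IsWeightedHomogeneous.algHom {τ M : Type*} [AddCommMonoid M] {w : σ → M} {w' : τ → M}
    {φ : MvPolynomial σ R →ₐ[R] MvPolynomial τ R}
    (hφ : ∀ i, (φ (X i)).IsWeightedHomogeneous w' (w i))
    {p : MvPolynomial σ R} {m : M} (hp : p.IsWeightedHomogeneous w m) :
    (φ p).IsWeightedHomogeneous w' m := by
  classical
  rw [p.as_sum, map_sum]
  refine IsWeightedHomogeneous.sum _ _ _ fun D hD => ?_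
  rw [← hp (mem_support_iff.mp hD), monomial_eq, map_mul, map_finsuppProd,
    Finsupp.weight_apply, Finsupp.prod, Finsupp.sum]
  simpa using (isWeightedHomogeneous_C w' (coeff D p)).mul
    (IsWeightedHomogeneous.prod _ _ _ fun i _ => (hφ i).pow (D i))

theorem IsWeightedHomogeneous.homogeneousComponent {M : Type*} [AddCommMonoid M] {w : σ → M}
    {f : MvPolynomial σ R} {m : M} (hf : f.IsWeightedHomogeneous w m) (n : ℕ) :
    (homogeneousComponent n f).IsWeightedHomogeneous w m := by
  intro D hD
  rw [coeff_homogeneousComponent] at hD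
  split_ifs at hD
  · exact hf hD
  · exact absurd rfl hD

end MvPolynomial

namespace Anick

abbrev weight : Fin 4 → ℤ := ![1, 1, -1, -1]

variable {k : Type} [Field k]

noncomputable abbrev I (k : Type) [Field k] : Ideal (MvPolynomial (Fin 4) k) :=
  Ideal.span {X 0, X 1}

noncomputable abbrev V (k : Type) [Field k] : Submodule k (MvPolynomial (Fin 4) k) :=
  Submodule.span k {X 2, X 3}

theorem weight_apply (D : Fin 4 →₀ ℕ) :
    Finsupp.weight weight D = (D 0 : ℤ) + D 1 - D 2 - D 3 := by
  simp [Finsupp.weight_apply, Finsupp.sum_fintype, Fin.sum_univ_four]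
  ring

theorem weight_eq_neg_one {j : Fin 4} (hj : j = 2 ∨ j = 3) : weight j = -1 := by
  rcases hj with rfl | rfl <;> rfl

theorem degree_apply (D : Fin 4 →₀ ℕ) : D.degree = D 0 + D 1 + D 2 + D 3 := by
  simp [Finsupp.degree_eq_weight_one, Finsupp.weight_apply, Finsupp.sum_fintype,
    Fin.sum_univ_four]

theorem weight_eq_of_mem_support {p : MvPolynomial (Fin 4) k} {m : ℤ}
    (hp : p.IsWeightedHomogeneous weight m) {D : Fin 4 →₀ ℕ} (hD : D ∈ p.support) :
    (D 0 : ℤ) + D 1 - D 2 - D 3 = m :=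
  weight_apply D ▸ hp (mem_support_iff.mp hD)

theorem monomial_eq_X_pow (D : Fin 4 →₀ ℕ) (c : k) :
    monomial D c = C c * X 0 ^ D 0 * X 1 ^ D 1 * X 2 ^ D 2 * X 3 ^ D 3 := by
  rw [monomial_eq, Finsupp.prod_fintype _ _ fun _ => pow_zero _, Fin.prod_univ_four]
  ring

theorem monomial_mem_I_pow {D : Fin 4 →₀ ℕ} {n : ℕ} (h : n ≤ D 0 + D 1) (c : k) :
    monomial D c ∈ I k ^ n := by
  have hX : (X 0 ^ D 0 * X 1 ^ D 1 : MvPolynomial (Fin 4) k) ∈ I k ^ (D 0 + D 1) :=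
    pow_add (I k) _ _ ▸ Ideal.mul_mem_mul
      (Ideal.pow_mem_pow (Ideal.subset_span (by simp)) _)
      (Ideal.pow_mem_pow (Ideal.subset_span (by simp)) _)
  rw [monomial_eq_X_pow]
  convert Ideal.mul_mem_left _ (C c * X 2 ^ D 2 * X 3 ^ D 3) (Ideal.pow_le_pow_right h hX)
    using 1
  ring

theorem mem_I_pow_of_forall_support {p : MvPolynomial (Fin 4) k} {n : ℕ}
    (h : ∀ D ∈ p.support, n ≤ D 0 + D 1) : p ∈ I k ^ n := by
  rw [p.as_sum]
  exact Ideal.sum_mem _ fun D hD => monomial_mem_I_pow (h D hD) _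

theorem mem_I_of_isWeightedHomogeneous_one {p : MvPolynomial (Fin 4) k}
    (hp : p.IsWeightedHomogeneous weight 1) : p ∈ I k := by
  refine pow_one (I k) ▸ mem_I_pow_of_forall_support fun D hD => ?_
  have := weight_eq_of_mem_support hp hD
  omega

theorem sub_homogeneousComponent_one_mem_I {f : MvPolynomial (Fin 4) k}
    (hf : f.IsWeightedHomogeneous weight (-1)) : f - homogeneousComponent 1 f ∈ I k := by
  refine pow_one (I k) ▸ mem_I_pow_of_forall_support fun D hD => ?_
  rw [mem_support_iff, coeff_sub, coeff_homogeneousComponent] at hD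
  split_ifs at hD with hdeg
  · simp at hD
  · have := weight_eq_of_mem_support hf (mem_support_iff.mpr (by simpa using hD))
    rw [degree_apply] at hdeg
    omega

theorem mem_V_of_isHomogeneous_one {p : MvPolynomial (Fin 4) k} (h1 : p.IsHomogeneous 1)
    (hw : p.IsWeightedHomogeneous weight (-1)) : p ∈ V k := by
  rw [p.as_sum]
  refine Submodule.sum_mem _ fun D hD => ?_
  have hdeg : D 0 + D 1 + D 2 + D 3 = 1 := by
    rw [← degree_apply, Finsupp.degree_eq_weight_one]
    exact h1 (mem_support_iff.mp hD)
  have hwt := weight_eq_of_mem_support hw hD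
  have h0 : D 0 = 0 := by omega
  have h1 : D 1 = 0 := by omega
  rw [monomial_eq_X_pow, h0, h1]
  rcases (by omega : D 2 = 1 ∧ D 3 = 0 ∨ D 2 = 0 ∧ D 3 = 1) with ⟨h2, h3⟩ | ⟨h2, h3⟩ <;>
  · simp only [h2, h3, pow_zero, pow_one, mul_one, ← smul_eq_C_mul]
    exact Submodule.smul_mem _ _ (Submodule.subset_span (by simp))

theorem eq_zero_of_mem_V_of_mem_I {p : MvPolynomial (Fin 4) k} (hV : p ∈ V k) (hI : p ∈ I k) :
    p = 0 := by
  let π : MvPolynomial (Fin 4) k →ₐ[k] MvPolynomial (Fin 4) k := aeval ![0, 0, X 2, X 3]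
  have hπV : ∀ v ∈ V k, π v = v := by
    intro v hv
    induction hv using Submodule.span_induction with
    | mem x hx => rcases hx with rfl | rfl <;> simp [π]
    | zero => simp
    | add x y _ _ hx hy => rw [map_add, hx, hy]
    | smul c x _ hx => rw [map_smul, hx]
  have hπI : Ideal.map π (I k) = ⊥ := by
    rw [Ideal.map_span, Ideal.span_eq_bot]
    rintro _ ⟨x, hx, rfl⟩
    rcases hx with rfl | rfl <;> simp [π]
  rw [← hπV p hV, ← Ideal.mem_bot, ← hπI]
  exact Ideal.mem_map_of_mem π hI

theorem mapsTo_V_of_X_mem {φ : MvPolynomial (Fin 4) k →ₐ[k] MvPolynomial (Fin 4) k}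
    (h2 : φ (X 2) ∈ V k) (h3 : φ (X 3) ∈ V k) : Set.MapsTo φ (V k) (V k) := by
  refine fun v hv => (Submodule.span_le (p := (V k).comap φ.toLinearMap)).mpr ?_ hv
  rintro _ (rfl | rfl)
  exacts [h2, h3]

theorem aeval_update_sub_aeval_update_mem_I {i₀ : Fin 4} {f g : MvPolynomial (Fin 4) k}
    (hfg : f - g ∈ I k) (r : MvPolynomial (Fin 4) k) :
    aeval (Function.update X i₀ (X i₀ + f)) r - aeval (Function.update X i₀ (X i₀ + g)) r
      ∈ I k :=
  algHom_sub_mem_of_X (fun j => by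
    rcases eq_or_ne j i₀ with rfl | hj
    · simpa using hfg
    · simp [Function.update_of_ne hj]) r

theorem aeval_update_sub_aeval_update_mem_I_pow_three {i₀ : Fin 4} (hi₀ : i₀ = 2 ∨ i₀ = 3)
    {f g : MvPolynomial (Fin 4) k} (hfg : f - g ∈ I k) {r : MvPolynomial (Fin 4) k}
    (hr : r.IsWeightedHomogeneous weight 1) :
    aeval (Function.update X i₀ (X i₀ + f)) r - aeval (Function.update X i₀ (X i₀ + g)) r
      ∈ I k ^ 3 := by
  set φ : MvPolynomial (Fin 4) k →ₐ[k] MvPolynomial (Fin 4) k :=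
    aeval (Function.update X i₀ (X i₀ + f))
  set ψ : MvPolynomial (Fin 4) k →ₐ[k] MvPolynomial (Fin 4) k :=
    aeval (Function.update X i₀ (X i₀ + g))
  have h0 : (0 : Fin 4) ≠ i₀ := by rcases hi₀ with rfl | rfl <;> decide
  have h1 : (1 : Fin 4) ≠ i₀ := by rcases hi₀ with rfl | rfl <;> decide
  have heq : Set.EqOn φ ψ {X 0, X 1} := by
    rintro _ (rfl | rfl) <;> simp [φ, ψ, Function.update_of_ne h0, Function.update_of_ne h1]
  have hmaps : Set.MapsTo φ {X 0, X 1} (I k) := by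
    rintro _ (rfl | rfl) <;>
      simpa [φ, Function.update_of_ne h0, Function.update_of_ne h1] using
        Ideal.subset_span (by simp)
  rw [r.as_sum, map_sum, map_sum, ← Finset.sum_sub_distrib]
  refine Ideal.sum_mem _ fun D hD => ?_
  by_cases hD₀ : D i₀ = 0
  · -- this monomial only involves variables on which `φ` and `ψ` agree
    rw [aeval_monomial, aeval_monomial, Finsupp.prod_congr fun j hj => ?_, sub_self]
    · exact zero_mem _
    · have hj₀ : j ≠ i₀ := by rintro rfl; exact Finsupp.mem_support_iff.mp hj hD₀
      rw [Function.update_of_ne hj₀, Function.update_of_ne hj₀]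
  · have hm : monomial D (coeff D r) ∈ I k ^ 2 := monomial_mem_I_pow (by
      have := weight_eq_of_mem_support hr hD
      rcases hi₀ with rfl | rfl <;> omega) _
    exact pow_succ (I k) 2 ▸
      map_sub_map_mem_pow_mul heq hmaps (aeval_update_sub_aeval_update_mem_I hfg) hm

end Anick

namespace ElemDesc

open Anick

variable {k : Type} [Field k] {d : ElemDesc k}

theorem IsGood.isWeightedHomogeneous_toHom_X (hd : d.IsGood) (j : Fin 4) :
    (d.toHom (X j)).IsWeightedHomogeneous weight (weight j) := by
  rw [toHom, aeval_X]
  exact hd.2.1 j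

theorem IsGood.toHom_mem_I_pow (hd : d.IsGood) {n : ℕ} {p : MvPolynomial (Fin 4) k}
    (hp : p ∈ I k ^ n) : d.toHom p ∈ I k ^ n :=
  map_mem_pow_of_mapsTo (by
    rintro _ (rfl | rfl) <;>
      exact mem_I_of_isWeightedHomogeneous_one (hd.isWeightedHomogeneous_toHom_X _)) hp

theorem IsGood.toHom_mem_I (hd : d.IsGood) {p : MvPolynomial (Fin 4) k} (hp : p ∈ I k) :
    d.toHom p ∈ I k := by
  simpa using hd.toHom_mem_I_pow (n := 1) (by simpa using hp)

theorem IsGood.rhoHom_eq_toHom_or (hd : d.IsGood) :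
    d.rhoHom = d.toHom ∨ ∃ (i₀ : Fin 4) (f : MvPolynomial (Fin 4) k), (i₀ = 2 ∨ i₀ = 3) ∧
      f.IsWeightedHomogeneous weight (-1) ∧
      d.toHom = aeval (Function.update X i₀ (X i₀ + f)) ∧
      d.rhoHom = aeval (Function.update X i₀ (X i₀ + homogeneousComponent 1 f)) := by
  rcases d with A | ⟨i₀, f⟩
  · exact Or.inl rfl
  by_cases hi₀ : i₀ = 2 ∨ i₀ = 3
  · refine Or.inr ⟨i₀, f, hi₀, ?_, rfl, by rw [rhoHom, if_pos hi₀]⟩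
    have h : (X i₀ + f).IsWeightedHomogeneous weight (-1) := by
      simpa [toVec, weight_eq_neg_one hi₀] using hd.2.1 i₀
    have hX := isWeightedHomogeneous_X k weight i₀
    rw [weight_eq_neg_one hi₀] at hX
    simpa using h.sub hX
  · exact Or.inl (by rw [rhoHom, if_neg hi₀])

theorem IsGood.isWeightedHomogeneous_rhoHom_X (hd : d.IsGood) (j : Fin 4) :
    (d.rhoHom (X j)).IsWeightedHomogeneous weight (weight j) := by
  rcases hd.rhoHom_eq_toHom_or with h | ⟨i₀, f, hi₀, hf, -, h⟩
  · rw [h]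
    exact hd.isWeightedHomogeneous_toHom_X j
  · rw [h, aeval_X]
    rcases eq_or_ne j i₀ with rfl | hj
    · rw [Function.update_self, weight_eq_neg_one hi₀]
      exact (weight_eq_neg_one hi₀ ▸ isWeightedHomogeneous_X k weight j).add
        (hf.homogeneousComponent 1)
    · rw [Function.update_of_ne hj]
      exact isWeightedHomogeneous_X k weight j

theorem rhoHom_X_isHomogeneous_one (d : ElemDesc k) {j : Fin 4} (hj : j = 2 ∨ j = 3) :
    (d.rhoHom (X j)).IsHomogeneous 1 := by
  rcases d with A | ⟨i₀, f⟩
  · rw [rhoHom, toHom, aeval_X, toVec]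
    exact IsHomogeneous.sum _ _ _ fun i _ => isHomogeneous_C_mul_X _ i
  rw [rhoHom]
  split_ifs with hi₀
  · rw [aeval_X]
    rcases eq_or_ne j i₀ with rfl | hne
    · rw [Function.update_self]
      exact (isHomogeneous_X k j).add (homogeneousComponent_isHomogeneous 1 f)
    · rw [Function.update_of_ne hne]
      exact isHomogeneous_X k j
  · rw [toHom, aeval_X, toVec, Function.update_of_ne (by rintro rfl; exact hi₀ hj)]
    exact isHomogeneous_X k j

theorem IsGood.rhoHom_X_mem_V (hd : d.IsGood) {j : Fin 4} (hj : j = 2 ∨ j = 3) :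
    d.rhoHom (X j) ∈ V k :=
  mem_V_of_isHomogeneous_one (d.rhoHom_X_isHomogeneous_one hj)
    (weight_eq_neg_one hj ▸ hd.isWeightedHomogeneous_rhoHom_X j)

theorem IsGood.toHom_sub_rhoHom_mem_I (hd : d.IsGood) (r : MvPolynomial (Fin 4) k) :
    d.toHom r - d.rhoHom r ∈ I k := by
  rcases hd.rhoHom_eq_toHom_or with h | ⟨i₀, f, -, hf, hto, hrho⟩
  · rw [h, sub_self]
    exact zero_mem _
  · rw [hto, hrho]
    exact aeval_update_sub_aeval_update_mem_I (sub_homogeneousComponent_one_mem_I hf) r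

theorem IsGood.toHom_sub_rhoHom_mem_I_pow_three (hd : d.IsGood) {r : MvPolynomial (Fin 4) k}
    (hr : r.IsWeightedHomogeneous weight 1) : d.toHom r - d.rhoHom r ∈ I k ^ 3 := by
  rcases hd.rhoHom_eq_toHom_or with h | ⟨i₀, f, hi₀, hf, hto, hrho⟩
  · rw [h, sub_self]
    exact zero_mem _
  · rw [hto, hrho]
    exact aeval_update_sub_aeval_update_mem_I_pow_three hi₀
      (sub_homogeneousComponent_one_mem_I hf) hr

end ElemDesc

namespace Anick

variable {k : Type} [Field k]

theorem eq_X_of_mem_V_of_sub_mem_I {j : Fin 4} (hj : j = 2 ∨ j = 3)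
    {p : MvPolynomial (Fin 4) k} (hV : p ∈ V k) (hI : X j - p ∈ I k) : p = X j := by
  have hXj : X j ∈ V k := Submodule.subset_span (by rcases hj with rfl | rfl <;> simp)
  exact (sub_eq_zero.mp (eq_zero_of_mem_V_of_mem_I (sub_mem hXj hV) hI)).symm

/-- `P` and `Q` stand for the partial compositions `ζⱼ` and `ρⱼ`. -/
structure ReplacementInvariant (P Q : MvPolynomial (Fin 4) k →ₐ[k] MvPolynomial (Fin 4) k) :
    Prop where
  isWeightedHomogeneous_X : ∀ j, (Q (X j)).IsWeightedHomogeneous weight (weight j)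
  mapsTo_V : Set.MapsTo Q (V k) (V k)
  sub_mem_I_pow_three : ∀ j, weight j = 1 → P (X j) - Q (X j) ∈ I k ^ 3
  sub_mem_I : ∀ j, P (X j) - Q (X j) ∈ I k

theorem ReplacementInvariant.id :
    ReplacementInvariant (AlgHom.id k (MvPolynomial (Fin 4) k)) (AlgHom.id k _) where
  isWeightedHomogeneous_X j := MvPolynomial.isWeightedHomogeneous_X k weight j
  mapsTo_V _ hv := hv
  sub_mem_I_pow_three _ _ := by simp
  sub_mem_I _ := by simp

theorem ReplacementInvariant.comp {P Q : MvPolynomial (Fin 4) k →ₐ[k] MvPolynomial (Fin 4) k}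
    (h : ReplacementInvariant P Q) {d : ElemDesc k} (hd : d.IsGood) :
    ReplacementInvariant (d.toHom.comp P) (d.rhoHom.comp Q) where
  isWeightedHomogeneous_X j :=
    (h.isWeightedHomogeneous_X j).algHom hd.isWeightedHomogeneous_rhoHom_X
  mapsTo_V :=
    (mapsTo_V_of_X_mem (hd.rhoHom_X_mem_V (.inl rfl)) (hd.rhoHom_X_mem_V (.inr rfl))).comp
      h.mapsTo_V
  sub_mem_I_pow_three j hj := by
    rw [AlgHom.comp_apply, AlgHom.comp_apply, ← sub_add_sub_cancel _ (d.toHom (Q (X j))),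
      ← map_sub]
    exact add_mem (hd.toHom_mem_I_pow (h.sub_mem_I_pow_three j hj))
      (hd.toHom_sub_rhoHom_mem_I_pow_three (hj ▸ h.isWeightedHomogeneous_X j))
  sub_mem_I j := by
    rw [AlgHom.comp_apply, AlgHom.comp_apply, ← sub_add_sub_cancel _ (d.toHom (Q (X j))),
      ← map_sub]
    exact add_mem (hd.toHom_mem_I (h.sub_mem_I j)) (hd.toHom_sub_rhoHom_mem_I _)

theorem ReplacementInvariant.foldl {P Q : MvPolynomial (Fin 4) k →ₐ[k] MvPolynomial (Fin 4) k}
    (h : ReplacementInvariant P Q) (L : List (ElemDesc k)) (hL : ∀ d ∈ L, d.IsGood) :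
    ReplacementInvariant (L.foldl (fun acc d => d.toHom.comp acc) P)
      (L.foldl (fun acc d => d.rhoHom.comp acc) Q) := by
  induction L generalizing P Q with
  | nil => exact h
  | cons d L ih =>
    exact ih (h.comp (hL d List.mem_cons_self)) fun e he => hL e (List.mem_cons_of_mem d he)

end Anick

theorem anick_linear_part_replacement_general (k : Type) [Field k]
    (L : List (ElemDesc k))
    (hgood : ∀ d ∈ L, d.IsGood)
    (hζ : L.foldl (fun acc d => d.toHom.comp acc)
        (AlgHom.id k (MvPolynomial (Fin 4) k)) =
      (aeval ![X 0, X 1 + X 0 * (X 0 * X 3 - X 1 * X 2), X 2,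
          X 3 + X 2 * (X 0 * X 3 - X 1 * X 2)] :
        MvPolynomial (Fin 4) k →ₐ[k] MvPolynomial (Fin 4) k)) :
    (L.foldl (fun acc d => d.rhoHom.comp acc)
        (AlgHom.id k (MvPolynomial (Fin 4) k))) (X 2) = X 2 ∧
    (L.foldl (fun acc d => d.rhoHom.comp acc)
        (AlgHom.id k (MvPolynomial (Fin 4) k))) (X 3) = X 3 ∧
    ((aeval ![X 0, X 1 + X 0 * (X 0 * X 3 - X 1 * X 2), X 2,
        X 3 + X 2 * (X 0 * X 3 - X 1 * X 2)] :
      MvPolynomial (Fin 4) k →ₐ[k] MvPolynomial (Fin 4) k) (X 0) -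
      (L.foldl (fun acc d => d.rhoHom.comp acc)
        (AlgHom.id k (MvPolynomial (Fin 4) k))) (X 0))
      ∈ (Ideal.span ({X 0, X 1} : Set (MvPolynomial (Fin 4) k))) ^ 3 ∧
    ((aeval ![X 0, X 1 + X 0 * (X 0 * X 3 - X 1 * X 2), X 2,
        X 3 + X 2 * (X 0 * X 3 - X 1 * X 2)] :
      MvPolynomial (Fin 4) k →ₐ[k] MvPolynomial (Fin 4) k) (X 1) -
      (L.foldl (fun acc d => d.rhoHom.comp acc)
        (AlgHom.id k (MvPolynomial (Fin 4) k))) (X 1))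
      ∈ (Ideal.span ({X 0, X 1} : Set (MvPolynomial (Fin 4) k))) ^ 3 := by
  have h := Anick.ReplacementInvariant.id.foldl L hgood
  rw [hζ] at h
  set ρ := L.foldl (fun acc d => d.rhoHom.comp acc) (AlgHom.id k (MvPolynomial (Fin 4) k))
  have hX₂ : X 2 - ρ (X 2) ∈ Anick.I k := by simpa using h.sub_mem_I 2
  have hX₃ : X 3 - ρ (X 3) ∈ Anick.I k := by
    have hζ₃ : X 2 * (X 0 * X 3 - X 1 * X 2) ∈ Anick.I k :=
      Ideal.mul_mem_left _ _ (sub_mem (Ideal.mul_mem_right _ _ (Ideal.subset_span (by simp)))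
        (Ideal.mul_mem_right _ _ (Ideal.subset_span (by simp))))
    convert sub_mem (h.sub_mem_I 3) hζ₃ using 1
    simp only [aeval_X, Matrix.cons_val]
    ring
  have hV : ∀ j : Fin 4, j = 2 ∨ j = 3 → ρ (X j) ∈ Anick.V k := fun j hj =>
    h.mapsTo_V (Submodule.subset_span (by rcases hj with rfl | rfl <;> simp))
  exact ⟨Anick.eq_X_of_mem_V_of_sub_mem_I (.inl rfl) (hV 2 (.inl rfl)) hX₂,
    Anick.eq_X_of_mem_V_of_sub_mem_I (.inr rfl) (hV 3 (.inr rfl)) hX₃,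
    h.sub_mem_I_pow_three 0 rfl, h.sub_mem_I_pow_three 1 rfl⟩

/-- if Anick's automorphism `ζ` is a composition `φₙ ∘ ⋯ ∘ φ₁` of
grading-preserving elementary automorphisms, and `ρ` is obtained by replacing every
factor changing `y₃` or `y₄` by its linear part, then `ρ(y₃) = y₃`, `ρ(y₄) = y₄`, and
`ζ(y₁) - ρ(y₁), ζ(y₂) - ρ(y₂) ∈ I³` where `I = (y₁,y₂)`. -/
theorem anick_linear_part_replacement (k : Type) [Field k] [CharZero k]
    (L : List (ElemDesc k))
    (hgood : ∀ d ∈ L, d.IsGood)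
    (hζ : L.foldl (fun acc d => d.toHom.comp acc)
        (AlgHom.id k (MvPolynomial (Fin 4) k)) =
      (aeval ![X 0, X 1 + X 0 * (X 0 * X 3 - X 1 * X 2), X 2,
          X 3 + X 2 * (X 0 * X 3 - X 1 * X 2)] :
        MvPolynomial (Fin 4) k →ₐ[k] MvPolynomial (Fin 4) k)) :
    (L.foldl (fun acc d => d.rhoHom.comp acc)
        (AlgHom.id k (MvPolynomial (Fin 4) k))) (X 2) = X 2 ∧
    (L.foldl (fun acc d => d.rhoHom.comp acc)
        (AlgHom.id k (MvPolynomial (Fin 4) k))) (X 3) = X 3 ∧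
    ((aeval ![X 0, X 1 + X 0 * (X 0 * X 3 - X 1 * X 2), X 2,
        X 3 + X 2 * (X 0 * X 3 - X 1 * X 2)] :
      MvPolynomial (Fin 4) k →ₐ[k] MvPolynomial (Fin 4) k) (X 0) -
      (L.foldl (fun acc d => d.rhoHom.comp acc)
        (AlgHom.id k (MvPolynomial (Fin 4) k))) (X 0))
      ∈ (Ideal.span ({X 0, X 1} : Set (MvPolynomial (Fin 4) k))) ^ 3 ∧
    ((aeval ![X 0, X 1 + X 0 * (X 0 * X 3 - X 1 * X 2), X 2,
        X 3 + X 2 * (X 0 * X 3 - X 1 * X 2)] :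
      MvPolynomial (Fin 4) k →ₐ[k] MvPolynomial (Fin 4) k) (X 1) -
      (L.foldl (fun acc d => d.rhoHom.comp acc)
        (AlgHom.id k (MvPolynomial (Fin 4) k))) (X 1))
      ∈ (Ideal.span ({X 0, X 1} : Set (MvPolynomial (Fin 4) k))) ^ 3 :=
  anick_linear_part_replacement_general k L hgood hζ
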